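/- Converse direction: if B is bounded and the closure of Δ is m-accretive, then the closure of Δ' is m-accretive and H = (Δ+Δ')/2 is essentially self-adjoint. -/

import Mathlib

open scoped ComplexConjugate
noncomputable section

variable {V : Type*}

/-- The (non-symmetric) weighted graph Laplacian `Δf(x) = (1/m(x)) Σ_y b(x,y)(f(x)-f(y))`. -/
def lapOp (m : V → ℝ) (b : V → V → ℝ) (f : V → ℂ) (x : V) : ℂ :=
  (1 / (m x : ℂ)) * ∑' y, (b x y : ℂ) * (f x - f y)

/-- The skew-symmetric part `B = (Δ - Δ')/2`. -/
def skewOp (m : V → ℝ) (b : V → V → ℝ) (f : V → ℂ) (x : V) : ℂ :=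
  (1 / (m x : ℂ)) * ∑' y, (((b x y - b y x) / 2 : ℝ) : ℂ) * (f x - f y)

/-- The symmetrized weight `b'(x,y) = (b(x,y)+b(y,x))/2`. -/
def bsym (b : V → V → ℝ) (x y : V) : ℝ := (b x y + b y x) / 2

/-- The `ℓ²(V,m)` inner product `⟨f,g⟩ = Σ_x m(x) f(x) conj(g(x))`. -/
def gip (m : V → ℝ) (f g : V → ℂ) : ℂ := ∑' x, (m x : ℂ) * f x * conj (g x)

/-- The squared `ℓ²(V,m)` norm. -/
def l2normSq (m : V → ℝ) (f : V → ℂ) : ℝ := ∑' x, m x * ‖f x‖ ^ 2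

/-- Finitely supported functions (the domain `C_c(V)`). -/
def FinSupp (f : V → ℂ) : Prop := (Function.support f).Finite

/-- Local finiteness of the graph. -/
def LocFinGraph (b : V → V → ℝ) : Prop := ∀ x : V, {y | b x y ≠ 0 ∨ b y x ≠ 0}.Finite

/-- Kirchhoff's assumption (β): at each vertex the incoming and outgoing conductances agree. -/
def Kirchhoff (b : V → V → ℝ) : Prop := ∀ x : V, ∑' y, b x y = ∑' y, b y x

/-- Weak connectedness of the graph. -/
def WeaklyConnected (b : V → V → ℝ) : Prop :=
  ∀ x y : V, Relation.ReflTransGen (fun u v => b u v ≠ 0 ∨ b v u ≠ 0) x y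

/-- Membership in `ℓ²(V,m)`. -/
def MemL2 (m : V → ℝ) (f : V → ℂ) : Prop := Summable fun x => m x * ‖f x‖ ^ 2

/-- m-accretiveness of the closure of the operator `T` defined on `C_c(V) ⊆ ℓ²(V,m)`:
for every `λ` with `Re λ > 0`, the a-priori bound `Re(λ)‖f‖ ≤ ‖(T+λ)f‖` holds on `C_c(V)`
and the range of `T + λ` on `C_c(V)` is dense in `ℓ²(V,m)`.  (For an accretive operator this
is equivalent to: the left open half-plane lies in the resolvent set of the closure of `T`
and `‖(closure T + λ)⁻¹‖ ≤ 1/Re(λ)`.) -/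
def IsMAccretiveClosure (m : V → ℝ) (T : (V → ℂ) → V → ℂ) : Prop :=
  ∀ l : ℂ, 0 < l.re →
    (∀ f : V → ℂ, FinSupp f →
      l.re ^ 2 * l2normSq m f ≤ l2normSq m (fun x => T f x + l * f x)) ∧
    ∀ v : V → ℂ, MemL2 m v → ∀ ε : ℝ, 0 < ε →
      ∃ f : V → ℂ, FinSupp f ∧ l2normSq m (fun x => T f x + l * f x - v x) < ε

/-- Essential self-adjointness of a symmetric operator `T` defined on `C_c(V) ⊆ ℓ²(V,m)`,
phrased as density of the ranges of `T + i` and `T - i`. -/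
def EssSelfAdjointOn (m : V → ℝ) (T : (V → ℂ) → V → ℂ) : Prop :=
  ∀ l : ℂ, l = Complex.I ∨ l = -Complex.I →
    ∀ v : V → ℂ, MemL2 m v → ∀ ε : ℝ, 0 < ε →
      ∃ f : V → ℂ, FinSupp f ∧ l2normSq m (fun x => T f x + l * f x - v x) < ε

/-- χ-completeness of the weighted graph `(V,m,c)` (with symmetric weight `c`). -/
def ChiComplete (m : V → ℝ) (c : V → V → ℝ) : Prop :=
  ∃ (Bn : ℕ → Set V) (χ : ℕ → V → ℝ) (C : ℝ), 0 < C ∧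
    Monotone Bn ∧ (∀ n, (Bn n).Finite) ∧ (⋃ n, Bn n) = Set.univ ∧
    (∀ n, (Function.support (χ n)).Finite) ∧
    (∀ n x, 0 ≤ χ n x ∧ χ n x ≤ 1) ∧
    (∀ n x, x ∈ Bn n → χ n x = 1) ∧
    (∀ n x, (1 / m x) * ∑' y, c x y * |χ n x - χ n y| ^ 2 ≤ C)

/-- The asymmetry condition (hypothesis \eqref{thm-chi}):
`(1/m(x)) Σ_y |b(x,y) - b(y,x)|²/b'(x,y) ≤ C` for all `x`. -/
def AsymCond (m : V → ℝ) (b : V → V → ℝ) (C : ℝ) : Prop :=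
  ∀ x : V, (1 / m x) * ∑' y, |b x y - b y x| ^ 2 / bsym b x y ≤ C

namespace Stmt11Aux

variable {m : V → ℝ}

/-- the ℓ² norm -/
def nrm (m : V → ℝ) (f : V → ℂ) : ℝ := Real.sqrt (l2normSq m f)

lemma l2normSq_nonneg (hm : ∀ x, 0 < m x) (f : V → ℂ) : 0 ≤ l2normSq m f :=
  tsum_nonneg fun x => mul_nonneg (hm x).le (by positivity)

lemma nrm_nonneg (f : V → ℂ) : 0 ≤ nrm m f := Real.sqrt_nonneg _

lemma nrm_sq (hm : ∀ x, 0 < m x) (f : V → ℂ) : nrm m f ^ 2 = l2normSq m f :=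
  Real.sq_sqrt (l2normSq_nonneg hm f)

lemma finSupp_zero : FinSupp (fun _ : V => (0 : ℂ)) := by
  simp [FinSupp]

lemma finSupp_add {f g : V → ℂ} (hf : FinSupp f) (hg : FinSupp g) :
    FinSupp (fun x => f x + g x) := by
  refine (hf.union hg).subset ?_
  intro x hx
  simp only [Function.mem_support] at hx
  by_contra h
  simp only [Set.mem_union, Function.mem_support, not_or, not_not] at h
  exact hx (by rw [h.1, h.2, add_zero])

lemma memL2_congr {f g : V → ℂ} (h : ∀ x, ‖f x‖ = ‖g x‖) (hf : MemL2 m f) : MemL2 m g := by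
  unfold MemL2 at *
  convert hf using 2 with x
  rw [h]

lemma l2normSq_congr {f g : V → ℂ} (h : ∀ x, ‖f x‖ = ‖g x‖) :
    l2normSq m f = l2normSq m g := by
  unfold l2normSq
  congr 1; funext x; rw [h]

lemma nrm_congr {f g : V → ℂ} (h : ∀ x, ‖f x‖ = ‖g x‖) : nrm m f = nrm m g := by
  unfold nrm; rw [l2normSq_congr h]

lemma memL2_finSupp (hm : ∀ x, 0 < m x) {f : V → ℂ} (hf : FinSupp f) : MemL2 m f := by
  refine summable_of_ne_finset_zero (s := hf.toFinset) ?_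
  intro x hx
  have : f x = 0 := by
    by_contra h
    exact hx (hf.mem_toFinset.2 h)
  simp [this]

lemma sum_le_l2normSq (hm : ∀ x, 0 < m x) {f : V → ℂ} (hf : MemL2 m f) (s : Finset V) :
    ∑ x ∈ s, m x * ‖f x‖ ^ 2 ≤ l2normSq m f :=
  Summable.sum_le_tsum s (fun x _ => mul_nonneg (hm x).le (by positivity)) hf

lemma l2normSq_eq_sum (hm : ∀ x, 0 < m x) {f : V → ℂ} (s : Finset V)
    (hs : ∀ x ∉ s, f x = 0) : l2normSq m f = ∑ x ∈ s, m x * ‖f x‖ ^ 2 :=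
  tsum_eq_sum (fun x hx => by simp [hs x hx])

end Stmt11Aux


namespace Stmt11Aux
variable {V : Type*} {m : V → ℝ}

lemma triangle (hm : ∀ x, 0 < m x) {f g : V → ℂ} (hf : MemL2 m f) (hg : MemL2 m g) :
    MemL2 m (fun x => f x + g x) ∧
      nrm m (fun x => f x + g x) ≤ nrm m f + nrm m g := by
  set C := nrm m f + nrm m g with hC
  have hC0 : 0 ≤ C := add_nonneg (nrm_nonneg f) (nrm_nonneg g)
  have key : ∀ s : Finset V, ∑ x ∈ s, m x * ‖f x + g x‖ ^ 2 ≤ C ^ 2 := by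
    intro s
    set u : V → ℝ := fun x => Real.sqrt (m x) * ‖f x‖ with hu
    set w : V → ℝ := fun x => Real.sqrt (m x) * ‖g x‖ with hw
    have hu2 : ∀ x, u x ^ 2 = m x * ‖f x‖ ^ 2 := fun x => by
      rw [hu]; simp only; rw [mul_pow, Real.sq_sqrt (hm x).le]
    have hw2 : ∀ x, w x ^ 2 = m x * ‖g x‖ ^ 2 := fun x => by
      rw [hw]; simp only; rw [mul_pow, Real.sq_sqrt (hm x).le]
    have h1 : ∀ x, m x * ‖f x + g x‖ ^ 2 ≤ (u x + w x) ^ 2 := by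
      intro x
      have h2 : ‖f x + g x‖ ^ 2 ≤ (‖f x‖ + ‖g x‖) ^ 2 := by
        have := norm_add_le (f x) (g x)
        nlinarith [norm_nonneg (f x + g x), norm_nonneg (f x), norm_nonneg (g x)]
      have h3 : (u x + w x) ^ 2 = m x * (‖f x‖ + ‖g x‖) ^ 2 := by
        rw [hu, hw]; simp only
        rw [← mul_add, mul_pow, Real.sq_sqrt (hm x).le]
      rw [h3]
      exact mul_le_mul_of_nonneg_left h2 (hm x).le
    have hfs : Real.sqrt (∑ x ∈ s, u x ^ 2) ≤ nrm m f := by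
      unfold nrm
      apply Real.sqrt_le_sqrt
      calc ∑ x ∈ s, u x ^ 2 = ∑ x ∈ s, m x * ‖f x‖ ^ 2 :=
            Finset.sum_congr rfl fun x _ => hu2 x
        _ ≤ l2normSq m f := sum_le_l2normSq hm hf s
    have hgs : Real.sqrt (∑ x ∈ s, w x ^ 2) ≤ nrm m g := by
      unfold nrm
      apply Real.sqrt_le_sqrt
      calc ∑ x ∈ s, w x ^ 2 = ∑ x ∈ s, m x * ‖g x‖ ^ 2 :=
            Finset.sum_congr rfl fun x _ => hw2 x
        _ ≤ l2normSq m g := sum_le_l2normSq hm hg s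
    have hcs : ∑ x ∈ s, u x * w x ≤ nrm m f * nrm m g := by
      calc ∑ x ∈ s, u x * w x
          ≤ Real.sqrt (∑ x ∈ s, u x ^ 2) * Real.sqrt (∑ x ∈ s, w x ^ 2) :=
            Real.sum_mul_le_sqrt_mul_sqrt s u w
        _ ≤ nrm m f * nrm m g :=
            mul_le_mul hfs hgs (Real.sqrt_nonneg _) (nrm_nonneg f)
    have hsqf : ∑ x ∈ s, u x ^ 2 ≤ nrm m f ^ 2 := by
      calc ∑ x ∈ s, u x ^ 2 = ∑ x ∈ s, m x * ‖f x‖ ^ 2 :=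
            Finset.sum_congr rfl fun x _ => hu2 x
        _ ≤ l2normSq m f := sum_le_l2normSq hm hf s
        _ = nrm m f ^ 2 := (nrm_sq hm f).symm
    have hsqg : ∑ x ∈ s, w x ^ 2 ≤ nrm m g ^ 2 := by
      calc ∑ x ∈ s, w x ^ 2 = ∑ x ∈ s, m x * ‖g x‖ ^ 2 :=
            Finset.sum_congr rfl fun x _ => hw2 x
        _ ≤ l2normSq m g := sum_le_l2normSq hm hg s
        _ = nrm m g ^ 2 := (nrm_sq hm g).symm
    calc ∑ x ∈ s, m x * ‖f x + g x‖ ^ 2 ≤ ∑ x ∈ s, (u x + w x) ^ 2 :=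
          Finset.sum_le_sum fun x _ => h1 x
      _ = ∑ x ∈ s, u x ^ 2 + 2 * ∑ x ∈ s, u x * w x + ∑ x ∈ s, w x ^ 2 := by
          rw [Finset.mul_sum, ← Finset.sum_add_distrib, ← Finset.sum_add_distrib]
          exact Finset.sum_congr rfl fun x _ => by ring
      _ ≤ nrm m f ^ 2 + 2 * (nrm m f * nrm m g) + nrm m g ^ 2 := by
          have h2 : (0:ℝ) ≤ 2 := by norm_num
          gcongr
      _ = C ^ 2 := by rw [hC]; ring
  have hsum : MemL2 m (fun x => f x + g x) :=
    summable_of_sum_le (fun x => mul_nonneg (hm x).le (by positivity)) key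
  refine ⟨hsum, ?_⟩
  have hle : l2normSq m (fun x => f x + g x) ≤ C ^ 2 := Summable.tsum_le_of_sum_le hsum key
  calc nrm m (fun x => f x + g x) ≤ Real.sqrt (C ^ 2) := Real.sqrt_le_sqrt hle
    _ = C := Real.sqrt_sq hC0

lemma memL2_add (hm : ∀ x, 0 < m x) {f g : V → ℂ} (hf : MemL2 m f) (hg : MemL2 m g) :
    MemL2 m (fun x => f x + g x) := (triangle hm hf hg).1

lemma nrm_add_le (hm : ∀ x, 0 < m x) {f g : V → ℂ} (hf : MemL2 m f) (hg : MemL2 m g) :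
    nrm m (fun x => f x + g x) ≤ nrm m f + nrm m g := (triangle hm hf hg).2

lemma l2normSq_smul (c : ℂ) (f : V → ℂ) :
    l2normSq m (fun x => c * f x) = ‖c‖ ^ 2 * l2normSq m f := by
  unfold l2normSq
  rw [← tsum_mul_left]
  congr 1; funext x
  rw [norm_mul]; ring

lemma nrm_smul (hm : ∀ x, 0 < m x) (c : ℂ) (f : V → ℂ) :
    nrm m (fun x => c * f x) = ‖c‖ * nrm m f := by
  unfold nrm
  rw [l2normSq_smul, Real.sqrt_mul (by positivity), Real.sqrt_sq (norm_nonneg c)]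

end Stmt11Aux

namespace Stmt11Aux
open scoped ComplexConjugate
variable {V : Type*} {m : V → ℝ}

lemma gip_eq_sum (hm : ∀ x, 0 < m x) {f : V → ℂ} (g : V → ℂ) (s : Finset V)
    (hs : ∀ x ∉ s, f x = 0) :
    gip m g f = ∑ x ∈ s, (m x : ℂ) * g x * conj (f x) :=
  tsum_eq_sum (fun x hx => by simp [hs x hx])

lemma abs_gip_le (hm : ∀ x, 0 < m x) {f g : V → ℂ} (hf : FinSupp f) (hg : MemL2 m g) :
    ‖gip m g f‖ ≤ nrm m g * nrm m f := by
  classical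
  set s := hf.toFinset with hsdef
  have hs : ∀ x ∉ s, f x = 0 := fun x hx => by
    by_contra h; exact hx (hf.mem_toFinset.2 h)
  rw [gip_eq_sum hm g s hs]
  set u : V → ℝ := fun x => Real.sqrt (m x) * ‖g x‖ with hu
  set w : V → ℝ := fun x => Real.sqrt (m x) * ‖f x‖ with hw
  calc ‖∑ x ∈ s, (m x : ℂ) * g x * conj (f x)‖
      ≤ ∑ x ∈ s, ‖(m x : ℂ) * g x * conj (f x)‖ := by
        simpa using (norm_sum_le s (fun x => (m x : ℂ) * g x * conj (f x)))
    _ = ∑ x ∈ s, u x * w x := by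
        refine Finset.sum_congr rfl fun x _ => ?_
        rw [hu, hw]; simp only
        rw [norm_mul, norm_mul, Complex.norm_conj, Complex.norm_real, Real.norm_eq_abs,
          abs_of_pos (hm x)]
        have : m x = Real.sqrt (m x) * Real.sqrt (m x) :=
          (Real.mul_self_sqrt (hm x).le).symm
        calc m x * ‖g x‖ * ‖f x‖
            = (Real.sqrt (m x) * Real.sqrt (m x)) * ‖g x‖ * ‖f x‖ := by
              rw [← this]
          _ = (Real.sqrt (m x) * ‖g x‖) * (Real.sqrt (m x) * ‖f x‖) := by ring
    _ ≤ Real.sqrt (∑ x ∈ s, u x ^ 2) * Real.sqrt (∑ x ∈ s, w x ^ 2) :=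
        Real.sum_mul_le_sqrt_mul_sqrt s u w
    _ ≤ nrm m g * nrm m f := by
        apply mul_le_mul ?_ ?_ (Real.sqrt_nonneg _) (nrm_nonneg g)
        · unfold nrm
          apply Real.sqrt_le_sqrt
          calc ∑ x ∈ s, u x ^ 2 = ∑ x ∈ s, m x * ‖g x‖ ^ 2 := by
                refine Finset.sum_congr rfl fun x _ => ?_
                rw [hu]; simp only; rw [mul_pow, Real.sq_sqrt (hm x).le]
            _ ≤ l2normSq m g := sum_le_l2normSq hm hg s
        · unfold nrm
          apply Real.sqrt_le_sqrt
          calc ∑ x ∈ s, w x ^ 2 = ∑ x ∈ s, m x * ‖f x‖ ^ 2 := by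
                refine Finset.sum_congr rfl fun x _ => ?_
                rw [hw]; simp only; rw [mul_pow, Real.sq_sqrt (hm x).le]
            _ ≤ l2normSq m f := sum_le_l2normSq hm (memL2_finSupp hm hf) s

lemma apriori_of_gip (hm : ∀ x, 0 < m x) {f g : V → ℂ} (hf : FinSupp f) (hg : MemL2 m g)
    {a : ℝ} (hlow : a * l2normSq m f ≤ ‖gip m g f‖) :
    a * nrm m f ≤ nrm m g := by
  rcases eq_or_lt_of_le (nrm_nonneg (m := m) f) with h0 | hpos
  · rw [← h0, mul_zero]; exact nrm_nonneg g
  · have h2 : a * nrm m f * nrm m f ≤ nrm m g * nrm m f := by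
      calc a * nrm m f * nrm m f = a * l2normSq m f := by
            rw [← nrm_sq hm f]; ring
        _ ≤ ‖gip m g f‖ := hlow
        _ ≤ nrm m g * nrm m f := abs_gip_le hm hf hg
    exact le_of_mul_le_mul_right h2 hpos

lemma gip_shift (hm : ∀ x, 0 < m x) {f : V → ℂ} (hf : FinSupp f) (g : V → ℂ) (μ : ℂ) :
    gip m (fun x => g x + μ * f x) f = gip m g f + μ * (l2normSq m f : ℂ) := by
  classical
  set s := hf.toFinset with hsdef
  have hs : ∀ x ∉ s, f x = 0 := fun x hx => by
    by_contra h; exact hx (hf.mem_toFinset.2 h)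
  rw [gip_eq_sum hm _ s hs, gip_eq_sum hm g s hs, l2normSq_eq_sum hm s hs]
  push_cast
  rw [Finset.mul_sum, ← Finset.sum_add_distrib]
  refine Finset.sum_congr rfl fun x _ => ?_
  have hc : (f x) * conj (f x) = ((‖f x‖ ^ 2 : ℝ) : ℂ) := by
    rw [Complex.mul_conj]
    norm_cast
    rw [Complex.normSq_eq_norm_sq]
  calc (m x : ℂ) * (g x + μ * f x) * conj (f x)
      = (m x : ℂ) * g x * conj (f x) + μ * ((m x : ℂ) * (f x * conj (f x))) := by ring
    _ = (m x : ℂ) * g x * conj (f x) + μ * ((m x : ℂ) * ((‖f x‖ ^ 2 : ℝ) : ℂ)) := by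
        rw [hc]
    _ = (m x : ℂ) * g x * conj (f x) + μ * ((m x : ℂ) * (‖f x‖ : ℂ) ^ 2) := by push_cast; ring

end Stmt11Aux

namespace Stmt11Aux
open scoped ComplexConjugate
variable {V : Type*} {m : V → ℝ} {b : V → V → ℝ}

/-- coefficient supported on the edges of the locally finite graph -/
def GoodCoef (b c : V → V → ℝ) : Prop := ∀ x y, c x y ≠ 0 → (b x y ≠ 0 ∨ b y x ≠ 0)

def nb (hlf : LocFinGraph b) (x : V) : Finset V := (hlf x).toFinset

lemma mem_nb (hlf : LocFinGraph b) {x y : V} :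
    y ∈ nb hlf x ↔ (b x y ≠ 0 ∨ b y x ≠ 0) := (hlf x).mem_toFinset

lemma skew_eq (m : V → ℝ) (b : V → V → ℝ) :
    skewOp m b = lapOp m (fun x y => (b x y - b y x) / 2) := rfl

lemma goodCoef_b : GoodCoef b b := fun _ _ h => Or.inl h

lemma goodCoef_bt : GoodCoef b (fun x y => b y x) := fun _ _ h => Or.inr h

lemma goodCoef_skew : GoodCoef b (fun x y => (b x y - b y x) / 2) := by
  intro x y h
  by_contra hn
  push_neg at hn
  simp only at h
  rw [hn.1, hn.2] at h
  simp at h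

lemma goodCoef_bsym : GoodCoef b (bsym b) := by
  intro x y h
  by_contra hn
  push_neg at hn
  unfold bsym at h
  rw [hn.1, hn.2] at h
  simp at h

lemma lapOp_eq_sum (hlf : LocFinGraph b) {c : V → V → ℝ} (hc : GoodCoef b c)
    (f : V → ℂ) (x : V) (s : Finset V) (hs : nb hlf x ⊆ s) :
    lapOp m c f x = (1 / (m x : ℂ)) * ∑ y ∈ s, (c x y : ℂ) * (f x - f y) := by
  unfold lapOp
  congr 1
  refine tsum_eq_sum fun y hy => ?_
  have hcz : c x y = 0 := by
    by_contra h
    exact hy (hs ((mem_nb hlf).2 (hc x y h)))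
  simp [hcz]

lemma lapOp_zero {c : V → V → ℝ} (x : V) : lapOp m c (fun _ => (0 : ℂ)) x = 0 := by
  unfold lapOp
  simp

lemma lapOp_add (hlf : LocFinGraph b) {c : V → V → ℝ} (hc : GoodCoef b c)
    (f g : V → ℂ) (x : V) :
    lapOp m c (fun y => f y + g y) x = lapOp m c f x + lapOp m c g x := by
  rw [lapOp_eq_sum hlf hc _ x (nb hlf x) subset_rfl,
    lapOp_eq_sum hlf hc f x (nb hlf x) subset_rfl,
    lapOp_eq_sum hlf hc g x (nb hlf x) subset_rfl, ← mul_add, ← Finset.sum_add_distrib]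
  congr 1
  refine Finset.sum_congr rfl fun y _ => ?_
  ring

lemma lapOp_finSupp (hlf : LocFinGraph b) {c : V → V → ℝ} (hc : GoodCoef b c)
    {f : V → ℂ} (hf : FinSupp f) : FinSupp (lapOp m c f) := by
  refine (hf.union (hf.biUnion (fun z _ => hlf z))).subset ?_
  intro x hx
  by_contra h
  simp only [Set.mem_union, Set.mem_iUnion, Function.mem_support] at h hx
  push_neg at h
  obtain ⟨hfx, hnb⟩ := h
  apply hx
  unfold lapOp
  have hterm : ∀ y, (c x y : ℂ) * (f x - f y) = 0 := by
    intro y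
    by_cases hfy : f y = 0
    · simp [hfx, hfy]
    · have : x ∉ {w | b y w ≠ 0 ∨ b w y ≠ 0} := hnb y hfy
      simp only [Set.mem_setOf_eq, not_or, not_not] at this
      have hcz : c x y = 0 := by
        by_contra hcc
        rcases hc x y hcc with h1 | h1
        · exact h1 this.2
        · exact h1 this.1
      simp [hcz]
  rw [tsum_congr (fun y => hterm y), tsum_zero, mul_zero]

/-- the double-sum representation of `⟨Δ_c f, f⟩` -/
lemma gip_lap_eq (hm : ∀ x, 0 < m x) (hlf : LocFinGraph b) {c : V → V → ℝ}
    (hc : GoodCoef b c) {f : V → ℂ} (hf : FinSupp f) :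
    ∃ A : Finset V, (∀ x, f x ≠ 0 → x ∈ A) ∧ (∀ x, f x ≠ 0 → nb hlf x ⊆ A) ∧
      gip m (lapOp m c f) f =
        ∑ x ∈ A, ∑ y ∈ A, (c x y : ℂ) * (f x - f y) * conj (f x) := by
  classical
  set S := hf.toFinset with hS
  set A := S ∪ S.biUnion (fun z => nb hlf z) with hA
  have hSA : S ⊆ A := Finset.subset_union_left
  have hmemS : ∀ x, f x ≠ 0 → x ∈ S := fun x hx => hf.mem_toFinset.2 hx
  have hnbA : ∀ x, f x ≠ 0 → nb hlf x ⊆ A := by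
    intro x hx
    exact (Finset.subset_biUnion_of_mem _ (hmemS x hx)).trans Finset.subset_union_right
  have hfA : ∀ x, x ∉ A → f x = 0 := by
    intro x hx
    by_contra h
    exact hx (hSA (hmemS x h))
  refine ⟨A, fun x hx => hSA (hmemS x hx), hnbA, ?_⟩
  rw [gip_eq_sum hm _ A hfA]
  refine Finset.sum_congr rfl fun x hx => ?_
  by_cases hfx : f x = 0
  · simp [hfx]
  · rw [lapOp_eq_sum hlf hc f x A (hnbA x hfx)]
    have hmx : (m x : ℂ) ≠ 0 := Complex.ofReal_ne_zero.2 (hm x).ne'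
    calc (m x : ℂ) * ((1 / (m x : ℂ)) * ∑ y ∈ A, (c x y : ℂ) * (f x - f y)) * conj (f x)
        = ((m x : ℂ) * (1 / (m x : ℂ))) *
            ((∑ y ∈ A, (c x y : ℂ) * (f x - f y)) * conj (f x)) := by ring
      _ = (∑ y ∈ A, (c x y : ℂ) * (f x - f y)) * conj (f x) := by
          rw [mul_one_div_cancel hmx, one_mul]
      _ = ∑ y ∈ A, (c x y : ℂ) * (f x - f y) * conj (f x) := Finset.sum_mul _ _ _

end Stmt11Aux

namespace Stmt11Aux
open scoped ComplexConjugate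
variable {V : Type*} {m : V → ℝ} {b : V → V → ℝ}

lemma key_re (z w : ℂ) : 2 * ((z - w) * conj z).re = ‖z‖ ^ 2 - ‖w‖ ^ 2 + ‖z - w‖ ^ 2 := by
  simp only [Complex.sq_norm, Complex.normSq_apply, Complex.mul_re,
    Complex.sub_re, Complex.sub_im, Complex.conj_re, Complex.conj_im]
  ring

lemma key_im (z w : ℂ) : ((z - w) * conj z).im + ((w - z) * conj w).im = 0 := by
  simp only [Complex.mul_im, Complex.sub_re, Complex.sub_im, Complex.conj_re, Complex.conj_im]
  ring

lemma green_core (hm : ∀ x, 0 < m x) (hlf : LocFinGraph b) {c : V → V → ℝ}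
    (hc : GoodCoef b c) {f : V → ℂ} (hf : FinSupp f) :
    ∃ A : Finset V, (∀ x, f x ≠ 0 → x ∈ A) ∧ (∀ x, f x ≠ 0 → nb hlf x ⊆ A) ∧
      (gip m (lapOp m c f) f).re =
        ∑ x ∈ A, ∑ y ∈ A, c x y * ((f x - f y) * conj (f x)).re ∧
      (gip m (lapOp m c f) f).im =
        ∑ x ∈ A, ∑ y ∈ A, c x y * ((f x - f y) * conj (f x)).im := by
  obtain ⟨A, hA1, hA2, hrep⟩ := gip_lap_eq hm hlf hc hf
  refine ⟨A, hA1, hA2, ?_, ?_⟩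
  · rw [hrep, Complex.re_sum]
    refine Finset.sum_congr rfl fun x _ => ?_
    rw [Complex.re_sum]
    refine Finset.sum_congr rfl fun y _ => ?_
    rw [mul_assoc, Complex.re_ofReal_mul]
  · rw [hrep, Complex.im_sum]
    refine Finset.sum_congr rfl fun x _ => ?_
    rw [Complex.im_sum]
    refine Finset.sum_congr rfl fun y _ => ?_
    rw [mul_assoc, Complex.im_ofReal_mul]

lemma kirchhoff_cancel (hlf : LocFinGraph b) {c : V → V → ℝ} (hc : GoodCoef b c)
    (hck : ∀ x, ∑ y ∈ nb hlf x, c x y = ∑ y ∈ nb hlf x, c y x)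
    {f : V → ℂ} {A : Finset V} (hA2 : ∀ x, f x ≠ 0 → nb hlf x ⊆ A) :
    ∑ x ∈ A, ∑ y ∈ A, c x y * (‖f x‖ ^ 2 - ‖f y‖ ^ 2) = 0 := by
  classical
  have hsplit : ∑ x ∈ A, ∑ y ∈ A, c x y * (‖f x‖ ^ 2 - ‖f y‖ ^ 2) =
      ∑ x ∈ A, ‖f x‖ ^ 2 * ((∑ y ∈ A, c x y) - (∑ y ∈ A, c y x)) := by
    have hswap : ∑ x ∈ A, ∑ y ∈ A, c x y * ‖f y‖ ^ 2 =
        ∑ x ∈ A, ∑ y ∈ A, c y x * ‖f x‖ ^ 2 := Finset.sum_comm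
    calc ∑ x ∈ A, ∑ y ∈ A, c x y * (‖f x‖ ^ 2 - ‖f y‖ ^ 2)
        = ∑ x ∈ A, ((∑ y ∈ A, c x y * ‖f x‖ ^ 2) - ∑ y ∈ A, c x y * ‖f y‖ ^ 2) := by
          refine Finset.sum_congr rfl fun x _ => ?_
          rw [← Finset.sum_sub_distrib]
          refine Finset.sum_congr rfl fun y _ => ?_
          ring
      _ = (∑ x ∈ A, ∑ y ∈ A, c x y * ‖f x‖ ^ 2) - ∑ x ∈ A, ∑ y ∈ A, c x y * ‖f y‖ ^ 2 :=
          Finset.sum_sub_distrib _ _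
      _ = (∑ x ∈ A, ∑ y ∈ A, c x y * ‖f x‖ ^ 2) - ∑ x ∈ A, ∑ y ∈ A, c y x * ‖f x‖ ^ 2 := by
          rw [hswap]
      _ = ∑ x ∈ A, ‖f x‖ ^ 2 * ((∑ y ∈ A, c x y) - (∑ y ∈ A, c y x)) := by
          rw [← Finset.sum_sub_distrib]
          refine Finset.sum_congr rfl fun x _ => ?_
          rw [← Finset.sum_mul, ← Finset.sum_mul, ← sub_mul, mul_comm]
  rw [hsplit]
  refine Finset.sum_eq_zero fun x hx => ?_
  by_cases hfx : f x = 0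
  · simp [hfx]
  · have h1 : ∑ y ∈ A, c x y = ∑ y ∈ nb hlf x, c x y := by
      refine (Finset.sum_subset (hA2 x hfx) fun y _ hy => ?_).symm
      by_contra h
      exact hy ((mem_nb hlf).2 (hc x y h))
    have h2 : ∑ y ∈ A, c y x = ∑ y ∈ nb hlf x, c y x := by
      refine (Finset.sum_subset (hA2 x hfx) fun y _ hy => ?_).symm
      by_contra h
      exact hy ((mem_nb hlf).2 (Or.symm (hc y x h)))
    rw [h1, h2, hck x, sub_self, mul_zero]

lemma green_re (hm : ∀ x, 0 < m x) (hlf : LocFinGraph b) {c : V → V → ℝ}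
    (hc : GoodCoef b c) (hck : ∀ x, ∑ y ∈ nb hlf x, c x y = ∑ y ∈ nb hlf x, c y x)
    (hc0 : ∀ x y, 0 ≤ c x y) {f : V → ℂ} (hf : FinSupp f) :
    0 ≤ (gip m (lapOp m c f) f).re := by
  obtain ⟨A, hA1, hA2, hre, -⟩ := green_core hm hlf hc hf
  have h2 : 2 * (gip m (lapOp m c f) f).re =
      (∑ x ∈ A, ∑ y ∈ A, c x y * (‖f x‖ ^ 2 - ‖f y‖ ^ 2)) +
        ∑ x ∈ A, ∑ y ∈ A, c x y * ‖f x - f y‖ ^ 2 := by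
    rw [hre, Finset.mul_sum, ← Finset.sum_add_distrib]
    refine Finset.sum_congr rfl fun x _ => ?_
    rw [Finset.mul_sum, ← Finset.sum_add_distrib]
    refine Finset.sum_congr rfl fun y _ => ?_
    have hk := key_re (f x) (f y)
    linear_combination c x y * hk
  have hz := kirchhoff_cancel hlf hc hck (f := f) hA2
  have hpos : 0 ≤ ∑ x ∈ A, ∑ y ∈ A, c x y * ‖f x - f y‖ ^ 2 :=
    Finset.sum_nonneg fun x _ => Finset.sum_nonneg fun y _ =>
      mul_nonneg (hc0 x y) (by positivity)
  linarith

lemma green_im (hm : ∀ x, 0 < m x) (hlf : LocFinGraph b) {c : V → V → ℝ}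
    (hc : GoodCoef b c) (hsym : ∀ x y, c x y = c y x) {f : V → ℂ} (hf : FinSupp f) :
    (gip m (lapOp m c f) f).im = 0 := by
  obtain ⟨A, hA1, hA2, -, him⟩ := green_core hm hlf hc hf
  have hswap : ∑ x ∈ A, ∑ y ∈ A, c x y * ((f x - f y) * conj (f x)).im =
      ∑ x ∈ A, ∑ y ∈ A, c x y * ((f y - f x) * conj (f y)).im := by
    rw [Finset.sum_comm]
    refine Finset.sum_congr rfl fun x _ => Finset.sum_congr rfl fun y _ => ?_
    rw [hsym x y]
  have h2 : 2 * (gip m (lapOp m c f) f).im = 0 := by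
    rw [two_mul]
    nth_rewrite 2 [him]
    rw [hswap, him, ← Finset.sum_add_distrib]
    refine Finset.sum_eq_zero fun x _ => ?_
    rw [← Finset.sum_add_distrib]
    refine Finset.sum_eq_zero fun y _ => ?_
    rw [← mul_add, key_im (f x) (f y), mul_zero]
  linarith

end Stmt11Aux

namespace Stmt11Aux
open scoped ComplexConjugate
variable {V : Type*} {m : V → ℝ} {b : V → V → ℝ}

lemma finSupp_smul (μ : ℂ) {f : V → ℂ} (hf : FinSupp f) : FinSupp (fun x => μ * f x) := by
  refine hf.subset ?_
  intro x hx
  simp only [Function.mem_support] at hx ⊢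
  intro h
  rw [h, mul_zero] at hx
  exact hx rfl

lemma finSupp_shift (hlf : LocFinGraph b) {c : V → V → ℝ} (hc : GoodCoef b c)
    {f : V → ℂ} (hf : FinSupp f) (μ : ℂ) :
    FinSupp (fun x => lapOp m c f x + μ * f x) :=
  finSupp_add (lapOp_finSupp hlf hc hf) (finSupp_smul μ hf)

lemma mul_ofReal_re (μ : ℂ) (L : ℝ) : (μ * (L : ℂ)).re = μ.re * L := by
  simp [Complex.mul_re]

lemma mul_ofReal_im (μ : ℂ) (L : ℝ) : (μ * (L : ℂ)).im = μ.im * L := by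
  simp [Complex.mul_im]

lemma apriori_acc (hm : ∀ x, 0 < m x) (hlf : LocFinGraph b) {c : V → V → ℝ}
    (hc : GoodCoef b c) (hck : ∀ x, ∑ y ∈ nb hlf x, c x y = ∑ y ∈ nb hlf x, c y x)
    (hc0 : ∀ x y, 0 ≤ c x y) (μ : ℂ) (hμ : 0 ≤ μ.re) {f : V → ℂ} (hf : FinSupp f) :
    μ.re * nrm m f ≤ nrm m (fun x => lapOp m c f x + μ * f x) := by
  apply apriori_of_gip hm hf (memL2_finSupp hm (finSupp_shift hlf hc hf μ))
  have hsh := gip_shift hm hf (lapOp m c f) μ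
  have hre : (gip m (fun x => lapOp m c f x + μ * f x) f).re =
      (gip m (lapOp m c f) f).re + μ.re * l2normSq m f := by
    rw [hsh, Complex.add_re, mul_ofReal_re]
  have hg := green_re hm hlf hc hck hc0 hf
  calc μ.re * l2normSq m f ≤ (gip m (fun x => lapOp m c f x + μ * f x) f).re := by
        rw [hre]; linarith
    _ ≤ ‖gip m (fun x => lapOp m c f x + μ * f x) f‖ :=
        Complex.re_le_norm _

lemma apriori_sym (hm : ∀ x, 0 < m x) (hlf : LocFinGraph b) {c : V → V → ℝ}
    (hc : GoodCoef b c) (hsym : ∀ x y, c x y = c y x) (μ : ℂ) {f : V → ℂ}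
    (hf : FinSupp f) :
    |μ.im| * nrm m f ≤ nrm m (fun x => lapOp m c f x + μ * f x) := by
  apply apriori_of_gip hm hf (memL2_finSupp hm (finSupp_shift hlf hc hf μ))
  have hsh := gip_shift hm hf (lapOp m c f) μ
  have him : (gip m (fun x => lapOp m c f x + μ * f x) f).im = μ.im * l2normSq m f := by
    rw [hsh, Complex.add_im, mul_ofReal_im, green_im hm hlf hc hsym hf, zero_add]
  calc |μ.im| * l2normSq m f = |μ.im * l2normSq m f| := by
        rw [abs_mul, abs_of_nonneg (l2normSq_nonneg hm f)]
    _ = |(gip m (fun x => lapOp m c f x + μ * f x) f).im| := by rw [him]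
    _ ≤ ‖gip m (fun x => lapOp m c f x + μ * f x) f‖ :=
        Complex.abs_im_le_norm _

end Stmt11Aux

namespace Stmt11Aux
variable {V : Type*} {m : V → ℝ}

lemma memL2_sub (hm : ∀ x, 0 < m x) {v w : V → ℂ} (hv : MemL2 m v) (hw : MemL2 m w) :
    MemL2 m (fun x => v x - w x) := by
  have hnw : MemL2 m (fun x => -(w x)) := memL2_congr (fun x => (norm_neg _).symm) hw
  have := memL2_add hm hv hnw
  exact memL2_congr (fun x => by rw [← sub_eq_add_neg]) this

def Dens (m : V → ℝ) (T : (V → ℂ) → V → ℂ) (l : ℂ) : Prop :=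
  ∀ v : V → ℂ, MemL2 m v → ∀ ε : ℝ, 0 < ε →
    ∃ f : V → ℂ, FinSupp f ∧ l2normSq m (fun x => T f x + l * f x - v x) < ε

lemma Dens_congr {T T' : (V → ℂ) → V → ℂ} {l l' : ℂ}
    (h : ∀ f, FinSupp f → ∀ x, T f x + l * f x = T' f x + l' * f x)
    (hd : Dens m T l) : Dens m T' l' := by
  intro v hv ε hε
  obtain ⟨f, hf, he⟩ := hd v hv ε hε
  refine ⟨f, hf, ?_⟩
  have heq : (fun x => T' f x + l' * f x - v x) = (fun x => T f x + l * f x - v x) :=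
    funext fun x => by rw [← h f hf x]
  rw [heq]
  exact he

lemma iterate (hm : ∀ x, 0 < m x) {T P : (V → ℂ) → V → ℂ} {μ : ℂ} {a : ℝ} (ha : 0 < a)
    (hT0 : ∀ x, T (fun _ => 0) x = 0) (hP0 : ∀ x, P (fun _ => 0) x = 0)
    (hTfin : ∀ f, FinSupp f → FinSupp (T f)) (hPfin : ∀ f, FinSupp f → FinSupp (P f))
    (hTadd : ∀ f g, FinSupp f → FinSupp g → ∀ x, T (fun y => f y + g y) x = T f x + T g x)
    (hPadd : ∀ f g, FinSupp f → FinSupp g → ∀ x, P (fun y => f y + g y) x = P f x + P g x)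
    (hPb : ∀ f, FinSupp f → nrm m (P f) ≤ (a / 2) * nrm m f)
    (hapr : ∀ f, FinSupp f → a * nrm m f ≤ nrm m (fun x => T f x + μ * f x))
    (hdens : Dens m T μ) :
    Dens m (fun f x => T f x + P f x) μ := by
  classical
  set Sop : (V → ℂ) → V → ℂ := fun f x => T f x + P f x + μ * f x with hSop
  have hSfin : ∀ f, FinSupp f → FinSupp (Sop f) := fun f hf =>
    finSupp_add (finSupp_add (hTfin f hf) (hPfin f hf)) (finSupp_smul μ hf)
  have step : ∀ v : V → ℂ, MemL2 m v → ∀ δ : ℝ, 0 < δ →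
      ∃ g, FinSupp g ∧ nrm m (fun x => v x - Sop g x) ≤ (1 / 2) * nrm m v + δ := by
    intro v hv δ hδ
    obtain ⟨g, hg, herr⟩ := hdens v hv ((δ / 2) ^ 2) (by positivity)
    have hTg : FinSupp (fun x => T g x + μ * g x) :=
      finSupp_add (hTfin g hg) (finSupp_smul μ hg)
    have he1 : nrm m (fun x => T g x + μ * g x - v x) < δ / 2 := by
      unfold nrm
      exact (Real.sqrt_lt' (by positivity)).2 herr
    have hmem1 : MemL2 m (fun x => T g x + μ * g x - v x) :=
      memL2_sub hm (memL2_finSupp hm hTg) hv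
    have hgb : nrm m g ≤ (nrm m v + δ / 2) / a := by
      have h1 : a * nrm m g ≤ nrm m (fun x => T g x + μ * g x) := hapr g hg
      have h2 : nrm m (fun x => T g x + μ * g x) ≤ nrm m v + δ / 2 := by
        have h3 := nrm_add_le hm hmem1 hv
        have heq : (fun x => (T g x + μ * g x - v x) + v x) = (fun x => T g x + μ * g x) :=
          funext fun x => by ring
        rw [heq] at h3
        linarith
      rw [le_div_iff₀ ha, mul_comm]
      exact h1.trans h2
    have hres : (fun x => v x - Sop g x) =
        fun x => (v x - (T g x + μ * g x)) + -(P g x) := by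
      funext x
      simp only [hSop]
      ring
    have hmem2 : MemL2 m (fun x => v x - (T g x + μ * g x)) :=
      memL2_sub hm hv (memL2_finSupp hm hTg)
    have hmem3 : MemL2 m (fun x => -(P g x)) :=
      memL2_congr (fun x => (norm_neg _).symm) (memL2_finSupp hm (hPfin g hg))
    refine ⟨g, hg, ?_⟩
    rw [hres]
    have e1 : nrm m (fun x => v x - (T g x + μ * g x)) =
        nrm m (fun x => T g x + μ * g x - v x) := nrm_congr fun x => norm_sub_rev _ _
    have e2 : nrm m (fun x => -(P g x)) = nrm m (P g) := nrm_congr fun x => norm_neg _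
    have hb := hPb g hg
    calc nrm m (fun x => (v x - (T g x + μ * g x)) + -(P g x))
        ≤ nrm m (fun x => v x - (T g x + μ * g x)) + nrm m (fun x => -(P g x)) :=
          nrm_add_le hm hmem2 hmem3
      _ ≤ δ / 2 + (a / 2) * nrm m g := by
          rw [e1, e2]
          have := he1.le
          linarith
      _ ≤ δ / 2 + (a / 2) * ((nrm m v + δ / 2) / a) := by
          have : (0:ℝ) ≤ a / 2 := by positivity
          exact add_le_add_right (mul_le_mul_of_nonneg_left hgb this) _
      _ = (1 / 2) * nrm m v + (δ / 2 + δ / 4) := by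
          field_simp
          ring
      _ ≤ (1 / 2) * nrm m v + δ := by linarith
  have main : ∀ n : ℕ, ∀ v : V → ℂ, MemL2 m v → ∀ δ : ℝ, 0 < δ →
      ∃ f, FinSupp f ∧ nrm m (fun x => v x - Sop f x) ≤ (1 / 2) ^ n * nrm m v + δ := by
    intro n
    induction n with
    | zero =>
      intro v hv δ hδ
      refine ⟨fun _ => 0, finSupp_zero, ?_⟩
      have h0 : ∀ x, Sop (fun _ => 0) x = 0 := fun x => by
        simp only [hSop]
        rw [hT0 x, hP0 x]
        ring
      have heq : (fun x => v x - Sop (fun _ => 0) x) = v :=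
        funext fun x => by rw [h0 x, sub_zero]
      rw [heq]
      simp only [pow_zero, one_mul]
      linarith
    | succ n ih =>
      intro v hv δ hδ
      obtain ⟨f₁, hf₁, h₁⟩ := ih v hv δ hδ
      have hrm : MemL2 m (fun x => v x - Sop f₁ x) :=
        memL2_sub hm hv (memL2_finSupp hm (hSfin f₁ hf₁))
      obtain ⟨g, hg, h₂⟩ := step _ hrm (δ / 2) (by positivity)
      refine ⟨fun x => f₁ x + g x, finSupp_add hf₁ hg, ?_⟩
      have hSadd : ∀ x, Sop (fun y => f₁ y + g y) x = Sop f₁ x + Sop g x := fun x => by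
        simp only [hSop]
        rw [hTadd f₁ g hf₁ hg x, hPadd f₁ g hf₁ hg x]
        ring
      have heq : (fun x => v x - Sop (fun y => f₁ y + g y) x) =
          (fun x => (v x - Sop f₁ x) - Sop g x) := funext fun x => by rw [hSadd x]; ring
      rw [heq]
      have h₂' : nrm m (fun x => (v x - Sop f₁ x) - Sop g x) ≤
          (1 / 2) * nrm m (fun x => v x - Sop f₁ x) + δ / 2 := h₂
      calc nrm m (fun x => (v x - Sop f₁ x) - Sop g x)
          ≤ (1 / 2) * nrm m (fun x => v x - Sop f₁ x) + δ / 2 := h₂'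
        _ ≤ (1 / 2) * ((1 / 2) ^ n * nrm m v + δ) + δ / 2 := by
            have : (0:ℝ) ≤ 1 / 2 := by norm_num
            exact add_le_add_left (mul_le_mul_of_nonneg_left h₁ this) _
        _ = (1 / 2) ^ (n + 1) * nrm m v + δ := by ring
  intro v hv ε hε
  set N := nrm m v with hN
  have hN0 : 0 ≤ N := nrm_nonneg v
  have hε' : 0 < Real.sqrt ε := Real.sqrt_pos.2 hε
  obtain ⟨n, hn⟩ := exists_pow_lt_of_lt_one
    (show (0:ℝ) < Real.sqrt ε / 2 / (N + 1) by positivity) (by norm_num : (1:ℝ) / 2 < 1)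
  obtain ⟨f, hf, hb⟩ := main n v hv (Real.sqrt ε / 4) (by positivity)
  refine ⟨f, hf, ?_⟩
  have h1 : (1 / 2 : ℝ) ^ n * N < Real.sqrt ε / 2 := by
    calc (1 / 2 : ℝ) ^ n * N ≤ (1 / 2) ^ n * (N + 1) := by
          exact mul_le_mul_of_nonneg_left (by linarith) (by positivity)
      _ < Real.sqrt ε / 2 / (N + 1) * (N + 1) := by
          exact mul_lt_mul_of_pos_right hn (by positivity)
      _ = Real.sqrt ε / 2 := by field_simp
  have h2 : nrm m (fun x => v x - Sop f x) < Real.sqrt ε := by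
    calc nrm m (fun x => v x - Sop f x) ≤ (1 / 2) ^ n * N + Real.sqrt ε / 4 := hb
      _ < Real.sqrt ε / 2 + Real.sqrt ε / 4 := by linarith
      _ < Real.sqrt ε := by linarith
  have e3 : nrm m (fun x => T f x + P f x + μ * f x - v x) =
      nrm m (fun x => v x - Sop f x) := by
    refine nrm_congr fun x => ?_
    simp only [hSop]
    exact norm_sub_rev _ _
  have hl2 : l2normSq m (fun x => T f x + P f x + μ * f x - v x) =
      nrm m (fun x => T f x + P f x + μ * f x - v x) ^ 2 := (nrm_sq hm _).symm
  rw [hl2, e3]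
  calc nrm m (fun x => v x - Sop f x) ^ 2 < Real.sqrt ε ^ 2 :=
        pow_lt_pow_left₀ h2 (nrm_nonneg _) two_ne_zero
    _ = ε := Real.sq_sqrt hε.le

end Stmt11Aux

namespace Stmt11Aux
variable {V : Type*} {m : V → ℝ} {b : V → V → ℝ}

lemma scalar_step (hm : ∀ x, 0 < m x) (hlf : LocFinGraph b) {c : V → V → ℝ}
    (hc : GoodCoef b c) {μ μ' : ℂ} {a : ℝ} (ha : 0 < a)
    (hapr : ∀ f : V → ℂ, FinSupp f →
      a * nrm m f ≤ nrm m (fun x => lapOp m c f x + μ * f x))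
    (hdist : ‖μ' - μ‖ ≤ a / 2)
    (hd : Dens m (lapOp m c) μ) : Dens m (lapOp m c) μ' := by
  have hit := iterate hm (T := lapOp m c) (P := fun f x => (μ' - μ) * f x) ha
    (fun x => lapOp_zero x) (fun x => by simp)
    (fun f hf => lapOp_finSupp hlf hc hf) (fun f hf => finSupp_smul _ hf)
    (fun f g hf hg x => lapOp_add hlf hc f g x) (fun f g hf hg x => by ring)
    (fun f hf => ?_) hapr hd
  · refine Dens_congr (fun f hf x => ?_) hit
    ring
  · have h1 : nrm m (fun x => (μ' - μ) * f x) = ‖μ' - μ‖ * nrm m f := nrm_smul hm _ f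
    rw [h1]
    exact mul_le_mul_of_nonneg_right hdist (nrm_nonneg f)

lemma march (hm : ∀ x, 0 < m x) (hlf : LocFinGraph b) {c : V → V → ℝ}
    (hc : GoodCoef b c)
    (hapr : ∀ μ : ℂ, 0 < μ.re → ∀ f : V → ℂ, FinSupp f →
      μ.re * nrm m f ≤ nrm m (fun x => lapOp m c f x + μ * f x))
    {l : ℂ} (hl : 0 < l.re) (t₀ : ℝ) (ht₀ : 0 < t₀)
    (hd : Dens m (lapOp m c) (l + (t₀ : ℂ))) : Dens m (lapOp m c) l := by
  have key : ∀ k : ℕ, Dens m (lapOp m c) (l + ((t₀ * (1 / 2) ^ k : ℝ) : ℂ)) := by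
    intro k
    induction k with
    | zero => simpa using hd
    | succ k ih =>
      set t : ℝ := t₀ * (1 / 2) ^ k with hts
      have ht : 0 < t := by positivity
      have hre : (l + (t : ℂ)).re = l.re + t := by simp
      have hrepos : 0 < (l + (t : ℂ)).re := by rw [hre]; linarith
      have ht' : t₀ * (1 / 2) ^ (k + 1) = t / 2 := by rw [hts]; ring
      refine scalar_step hm hlf hc (μ := l + (t : ℂ)) (a := l.re + t)
        (by linarith) ?_ ?_ ih
      · intro f hf
        have h := hapr (l + (t : ℂ)) hrepos f hf
        rwa [hre] at h
      · have heq : (l + ((t₀ * (1 / 2) ^ (k + 1) : ℝ) : ℂ)) - (l + (t : ℂ)) =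
            ((t / 2 - t : ℝ) : ℂ) := by
          rw [ht']
          push_cast
          ring
        rw [heq, Complex.norm_real, Real.norm_eq_abs, show t / 2 - t = -(t / 2) by ring, abs_neg,
          abs_of_nonneg (by positivity)]
        linarith
  obtain ⟨k, hk⟩ := exists_pow_lt_of_lt_one
    (show (0:ℝ) < l.re / t₀ by positivity) (by norm_num : (1:ℝ) / 2 < 1)
  set t : ℝ := t₀ * (1 / 2) ^ k with hts
  have ht : 0 < t := by positivity
  have htl : t ≤ l.re := by
    have : t₀ * (1 / 2) ^ k < t₀ * (l.re / t₀) := mul_lt_mul_of_pos_left hk ht₀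
    have h2 : t₀ * (l.re / t₀) = l.re := by field_simp
    rw [hts]
    linarith [this, h2.le]
  have hre : (l + (t : ℂ)).re = l.re + t := by simp
  have hrepos : 0 < (l + (t : ℂ)).re := by rw [hre]; linarith
  refine scalar_step hm hlf hc (μ := l + (t : ℂ)) (a := l.re + t) (by linarith) ?_ ?_ (key k)
  · intro f hf
    have h := hapr (l + (t : ℂ)) hrepos f hf
    rwa [hre] at h
  · have heq : l - (l + (t : ℂ)) = ((-t : ℝ) : ℂ) := by push_cast; ring
    rw [heq, Complex.norm_real, Real.norm_eq_abs, abs_neg, abs_of_nonneg ht.le]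
    linarith

end Stmt11Aux

namespace Stmt11Aux
variable {V : Type*}

theorem final (m : V → ℝ) (b : V → V → ℝ) (hm : ∀ x, 0 < m x)
    (hb : ∀ x y, 0 ≤ b x y) (hlf : LocFinGraph b) (hK : Kirchhoff b)
    (K : ℝ) (hK0 : 0 ≤ K)
    (hB : ∀ f : V → ℂ, FinSupp f →
      l2normSq m (skewOp m b f) ≤ K ^ 2 * l2normSq m f)
    (hacc : IsMAccretiveClosure m (lapOp m b)) :
    IsMAccretiveClosure m (lapOp m (fun x y => b y x)) ∧
    EssSelfAdjointOn m (lapOp m (bsym b)) := by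
  classical
  -- finite Kirchhoff condition
  have hKfin : ∀ x, ∑ y ∈ nb hlf x, b x y = ∑ y ∈ nb hlf x, b y x := by
    intro x
    have h1 : (∑' y, b x y) = ∑ y ∈ nb hlf x, b x y := tsum_eq_sum (fun y hy => by
      by_contra h
      exact hy ((mem_nb hlf).2 (Or.inl h)))
    have h2 : (∑' y, b y x) = ∑ y ∈ nb hlf x, b y x := tsum_eq_sum (fun y hy => by
      by_contra h
      exact hy ((mem_nb hlf).2 (Or.inr h)))
    rw [← h1, ← h2]
    exact hK x
  have hck_t : ∀ x, ∑ y ∈ nb hlf x, b y x = ∑ y ∈ nb hlf x, b x y :=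
    fun x => (hKfin x).symm
  have hck_s : ∀ x, ∑ y ∈ nb hlf x, bsym b x y = ∑ y ∈ nb hlf x, bsym b y x :=
    fun x => Finset.sum_congr rfl (fun y _ => by unfold bsym; ring)
  -- a-priori estimates
  have apr_b : ∀ μ : ℂ, 0 ≤ μ.re → ∀ f : V → ℂ, FinSupp f →
      μ.re * nrm m f ≤ nrm m (fun x => lapOp m b f x + μ * f x) :=
    fun μ hμ f hf => apriori_acc hm hlf goodCoef_b hKfin hb μ hμ hf
  have apr_t : ∀ μ : ℂ, 0 ≤ μ.re → ∀ f : V → ℂ, FinSupp f →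
      μ.re * nrm m f ≤ nrm m (fun x => lapOp m (fun x y => b y x) f x + μ * f x) :=
    fun μ hμ f hf => apriori_acc hm hlf goodCoef_bt hck_t (fun x y => hb y x) μ hμ hf
  have hbs0 : ∀ x y, 0 ≤ bsym b x y := fun x y =>
    div_nonneg (add_nonneg (hb x y) (hb y x)) (by norm_num)
  have apr_s : ∀ μ : ℂ, 0 ≤ μ.re → ∀ f : V → ℂ, FinSupp f →
      μ.re * nrm m f ≤ nrm m (fun x => lapOp m (bsym b) f x + μ * f x) :=
    fun μ hμ f hf => apriori_acc hm hlf goodCoef_bsym hck_s hbs0 μ hμ hf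
  have apr_sym : ∀ μ : ℂ, ∀ f : V → ℂ, FinSupp f →
      |μ.im| * nrm m f ≤ nrm m (fun x => lapOp m (bsym b) f x + μ * f x) :=
    fun μ f hf => apriori_sym hm hlf goodCoef_bsym
      (fun x y => by unfold bsym; ring) μ hf
  -- norm bound for the skew part
  have hBnrm : ∀ f : V → ℂ, FinSupp f → nrm m (skewOp m b f) ≤ K * nrm m f := by
    intro f hf
    have h := hB f hf
    have h2 : Real.sqrt (l2normSq m (skewOp m b f)) ≤
        Real.sqrt (K ^ 2 * l2normSq m f) := Real.sqrt_le_sqrt h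
    rwa [Real.sqrt_mul (sq_nonneg K), Real.sqrt_sq hK0] at h2
  -- pointwise operator identities
  have lap_t : ∀ (f : V → ℂ) (x : V), lapOp m (fun x y => b y x) f x =
      lapOp m b f x + (-2 : ℂ) * skewOp m b f x := by
    intro f x
    rw [skew_eq, lapOp_eq_sum hlf goodCoef_bt f x _ subset_rfl,
      lapOp_eq_sum hlf goodCoef_b f x _ subset_rfl,
      lapOp_eq_sum hlf goodCoef_skew f x _ subset_rfl]
    have hsum : ∑ y ∈ nb hlf x, ((b y x : ℝ) : ℂ) * (f x - f y) =
        ∑ y ∈ nb hlf x, ((b x y : ℝ) : ℂ) * (f x - f y) +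
          (-2 : ℂ) * ∑ y ∈ nb hlf x, (((b x y - b y x) / 2 : ℝ) : ℂ) * (f x - f y) := by
      rw [Finset.mul_sum, ← Finset.sum_add_distrib]
      refine Finset.sum_congr rfl fun y _ => ?_
      push_cast
      ring
    rw [hsum]
    ring
  have lap_s : ∀ (f : V → ℂ) (x : V), lapOp m (bsym b) f x =
      lapOp m b f x + (-1 : ℂ) * skewOp m b f x := by
    intro f x
    rw [skew_eq, lapOp_eq_sum hlf goodCoef_bsym f x _ subset_rfl,
      lapOp_eq_sum hlf goodCoef_b f x _ subset_rfl,
      lapOp_eq_sum hlf goodCoef_skew f x _ subset_rfl]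
    have hsum : ∑ y ∈ nb hlf x, ((bsym b x y : ℝ) : ℂ) * (f x - f y) =
        ∑ y ∈ nb hlf x, ((b x y : ℝ) : ℂ) * (f x - f y) +
          (-1 : ℂ) * ∑ y ∈ nb hlf x, (((b x y - b y x) / 2 : ℝ) : ℂ) * (f x - f y) := by
      rw [Finset.mul_sum, ← Finset.sum_add_distrib]
      refine Finset.sum_congr rfl fun y _ => ?_
      unfold bsym
      push_cast
      ring
    rw [hsum]
    ring
  -- density for Δ
  have densb : ∀ μ : ℂ, 0 < μ.re → Dens m (lapOp m b) μ :=
    fun μ hμ v hv ε hε => (hacc μ hμ).2 v hv ε hε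
  -- structural facts for the skew perturbations
  have skew_zero : ∀ x, skewOp m b (fun _ => (0:ℂ)) x = 0 := by
    intro x
    rw [skew_eq]
    exact lapOp_zero x
  have skew_fin : ∀ f : V → ℂ, FinSupp f → FinSupp (skewOp m b f) := by
    intro f hf
    rw [skew_eq]
    exact lapOp_finSupp hlf goodCoef_skew hf
  have skew_add : ∀ f g : V → ℂ, ∀ x, skewOp m b (fun y => f y + g y) x =
      skewOp m b f x + skewOp m b g x := by
    intro f g x
    rw [skew_eq]
    exact lapOp_add hlf goodCoef_skew f g x
  -- density for Δ'
  have dens_t : ∀ l : ℂ, 0 < l.re → Dens m (lapOp m (fun x y => b y x)) l := by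
    intro l hl
    set t₀ : ℝ := 4 * K + 1 with ht₀def
    have ht₀ : (0:ℝ) < t₀ := by rw [ht₀def]; linarith
    have hre0 : (l + (t₀ : ℂ)).re = l.re + t₀ := by simp
    have hbase : Dens m (lapOp m b) (l + (t₀ : ℂ)) := densb _ (by rw [hre0]; linarith)
    have hit := iterate hm (T := lapOp m b) (P := fun f x => (-2 : ℂ) * skewOp m b f x)
      (μ := l + (t₀ : ℂ)) (a := l.re + t₀) (by linarith)
      (fun x => lapOp_zero x)
      (fun x => by show (-2 : ℂ) * skewOp m b (fun _ => 0) x = 0; rw [skew_zero x, mul_zero])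
      (fun f hf => lapOp_finSupp hlf goodCoef_b hf)
      (fun f hf => finSupp_smul _ (skew_fin f hf))
      (fun f g hf hg x => lapOp_add hlf goodCoef_b f g x)
      (fun f g hf hg x => by
        show (-2 : ℂ) * skewOp m b (fun y => f y + g y) x =
          (-2 : ℂ) * skewOp m b f x + (-2 : ℂ) * skewOp m b g x
        rw [skew_add f g x]; ring)
      (fun f hf => ?_)
      (fun f hf => by
        have h := apr_b (l + (t₀ : ℂ)) (by rw [hre0]; linarith) f hf
        rwa [hre0] at h)
      hbase
    · have hbt : Dens m (lapOp m (fun x y => b y x)) (l + (t₀ : ℂ)) := by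
        refine Dens_congr (fun f hf x => ?_) hit
        rw [lap_t f x]
      exact march hm hlf goodCoef_bt (fun μ hμ => apr_t μ hμ.le) hl t₀ ht₀ hbt
    · have h1 : nrm m (fun x => (-2 : ℂ) * skewOp m b f x) =
          ‖(-2 : ℂ)‖ * nrm m (skewOp m b f) := nrm_smul hm _ _
      have h2 : ‖(-2 : ℂ)‖ = 2 := by simp
      rw [h1, h2]
      calc 2 * nrm m (skewOp m b f) ≤ 2 * K * nrm m f := by
            have := hBnrm f hf
            linarith
        _ ≤ (l.re + t₀) / 2 * nrm m f := by
            refine mul_le_mul_of_nonneg_right ?_ (nrm_nonneg f)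
            rw [ht₀def]
            linarith
  refine ⟨fun l hl => ⟨?_, fun v hv ε hε => dens_t l hl v hv ε hε⟩, ?_⟩
  · -- squared a-priori bound for Δ'
    intro f hf
    have h := apr_t l hl.le f hf
    have h2 : (l.re * nrm m f) ^ 2 ≤
        nrm m (fun x => lapOp m (fun x y => b y x) f x + l * f x) ^ 2 :=
      pow_le_pow_left₀ (mul_nonneg hl.le (nrm_nonneg f)) h 2
    rwa [mul_pow, nrm_sq hm, nrm_sq hm] at h2
  · -- essential self-adjointness of H
    have dens_s : ∀ l : ℂ, (l = Complex.I ∨ l = -Complex.I) →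
        Dens m (lapOp m (bsym b)) l := by
      intro l hl
      have hlre : l.re = 0 := by rcases hl with h | h <;> simp [h]
      have hlim : |l.im| = 1 := by rcases hl with h | h <;> simp [h]
      set t₀ : ℝ := 2 * K + 1 with ht₀def
      have ht₀ : (0:ℝ) < t₀ := by rw [ht₀def]; linarith
      have hre0 : (l + (t₀ : ℂ)).re = t₀ := by simp [hlre]
      have hbase : Dens m (lapOp m b) (l + (t₀ : ℂ)) := densb _ (by rw [hre0]; linarith)
      have hit := iterate hm (T := lapOp m b) (P := fun f x => (-1 : ℂ) * skewOp m b f x)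
        (μ := l + (t₀ : ℂ)) (a := t₀) ht₀
        (fun x => lapOp_zero x)
        (fun x => by show (-1 : ℂ) * skewOp m b (fun _ => 0) x = 0; rw [skew_zero x, mul_zero])
        (fun f hf => lapOp_finSupp hlf goodCoef_b hf)
        (fun f hf => finSupp_smul _ (skew_fin f hf))
        (fun f g hf hg x => lapOp_add hlf goodCoef_b f g x)
        (fun f g hf hg x => by
          show (-1 : ℂ) * skewOp m b (fun y => f y + g y) x =
            (-1 : ℂ) * skewOp m b f x + (-1 : ℂ) * skewOp m b g x
          rw [skew_add f g x]; ring)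
        (fun f hf => ?_)
        (fun f hf => by
          have h := apr_b (l + (t₀ : ℂ)) (by rw [hre0]; linarith) f hf
          rwa [hre0] at h)
        hbase
      · have hbs : Dens m (lapOp m (bsym b)) (l + (t₀ : ℂ)) := by
          refine Dens_congr (fun f hf x => ?_) hit
          rw [lap_s f x]
        -- halving of the real part
        have key : ∀ k : ℕ, Dens m (lapOp m (bsym b)) (l + ((t₀ * (1 / 2) ^ k : ℝ) : ℂ)) := by
          intro k
          induction k with
          | zero => simpa using hbs
          | succ k ih =>
            set t : ℝ := t₀ * (1 / 2) ^ k with hts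
            have ht : 0 < t := by positivity
            have hre : (l + (t : ℂ)).re = t := by simp [hlre]
            have ht' : t₀ * (1 / 2) ^ (k + 1) = t / 2 := by rw [hts]; ring
            refine scalar_step hm hlf goodCoef_bsym (μ := l + (t : ℂ)) (a := t) ht ?_ ?_ ih
            · intro f hf
              have h := apr_s (l + (t : ℂ)) (by rw [hre]; linarith) f hf
              rwa [hre] at h
            · have heq : (l + ((t₀ * (1 / 2) ^ (k + 1) : ℝ) : ℂ)) - (l + (t : ℂ)) =
                  ((t / 2 - t : ℝ) : ℂ) := by
                rw [ht']
                push_cast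
                ring
              rw [heq, Complex.norm_real, Real.norm_eq_abs, show t / 2 - t = -(t / 2) by ring, abs_neg,
                abs_of_nonneg (by positivity)]
        -- final jump to ± i
        obtain ⟨k, hk⟩ := exists_pow_lt_of_lt_one
          (show (0:ℝ) < (1 / 2) / t₀ by positivity) (by norm_num : (1:ℝ) / 2 < 1)
        set t : ℝ := t₀ * (1 / 2) ^ k with hts
        have ht : 0 < t := by positivity
        have htle : t ≤ 1 / 2 := by
          have h1 : t₀ * (1 / 2) ^ k < t₀ * ((1 / 2) / t₀) := mul_lt_mul_of_pos_left hk ht₀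
          have h2 : t₀ * ((1 / 2) / t₀) = 1 / 2 := by field_simp
          rw [hts]
          linarith [h1, h2.le]
        refine scalar_step hm hlf goodCoef_bsym (μ := l + (t : ℂ)) (a := 1)
          one_pos ?_ ?_ (key k)
        · intro f hf
          have h := apr_sym (l + (t : ℂ)) f hf
          have him : (l + (t : ℂ)).im = l.im := by simp
          rw [him, hlim] at h
          exact h
        · have heq : l - (l + (t : ℂ)) = ((-t : ℝ) : ℂ) := by push_cast; ring
          rw [heq, Complex.norm_real, Real.norm_eq_abs, abs_neg, abs_of_nonneg ht.le]
          linarith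
      · have h1 : nrm m (fun x => (-1 : ℂ) * skewOp m b f x) =
            ‖(-1 : ℂ)‖ * nrm m (skewOp m b f) := nrm_smul hm _ _
        have h2 : ‖(-1 : ℂ)‖ = 1 := by simp
        rw [h1, h2, one_mul]
        calc nrm m (skewOp m b f) ≤ K * nrm m f := hBnrm f hf
          _ ≤ t₀ / 2 * nrm m f := by
              refine mul_le_mul_of_nonneg_right ?_ (nrm_nonneg f)
              rw [ht₀def]
              linarith
    intro l hl v hv ε hε
    exact dens_s l hl v hv ε hε

end Stmt11Aux

/-- converse direction: if `B` is bounded and the closure of `Δ` is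
m-accretive, then the closure of `Δ'` is m-accretive and `H = (Δ+Δ')/2` is essentially
self-adjoint. -/
theorem stmt11 [Infinite V] (m : V → ℝ) (b : V → V → ℝ) (hm : ∀ x, 0 < m x)
    (hb : ∀ x y, 0 ≤ b x y) (hloop : ∀ x, b x x = 0) (hlf : LocFinGraph b)
    (hK : Kirchhoff b)
    (K : ℝ) (hK0 : 0 ≤ K)
    (hB : ∀ f : V → ℂ, FinSupp f →
      l2normSq m (skewOp m b f) ≤ K ^ 2 * l2normSq m f)
    (hacc : IsMAccretiveClosure m (lapOp m b)) :
    IsMAccretiveClosure m (lapOp m (fun x y => b y x)) ∧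
    EssSelfAdjointOn m (lapOp m (bsym b)) := by
  exact Stmt11Aux.final m b hm hb hlf hK K hK0 hB hacc
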